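/- arXiv:2412.05664 — 2 statements merged into one kernel-verified Lean document; each statement's English description precedes it below -/
import Mathlib

section
/- Under the rank-one local factor model, if all loadings b_k for k ∈ G are strictly positive and Σ_u is diagonal positive definite, then all off-diagonal entries of (Σ_u + σ_g² b bᵀ)^{-1} restricted to indices in G are strictly negative. -/
/-!
By Sherman–Morrison, `(D + s b bᵀ)⁻¹ = D⁻¹ - c (D⁻¹ b)(D⁻¹ b)ᵀ` with `c = s / (1 + s bᵀ D⁻¹ b)`.
For a positive diagonal `D` and `s > 0` we have `c > 0` and `D⁻¹` has no off-diagonal part, so the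
`(i, j)` entry with `i ≠ j` is `-c (b i / d i) (b j / d j)`, negative when `b i, b j > 0`.
-/

open Matrix

theorem Matrix.inv_add_vecMulVec {K n : Type*} [Field K] [Fintype n] [DecidableEq n]
    {A : Matrix n n K} (hA : IsUnit A) (u v : n → K) (h : 1 + v ⬝ᵥ A⁻¹ *ᵥ u ≠ 0) :
    (A + vecMulVec u v)⁻¹ =
      A⁻¹ - (1 + v ⬝ᵥ A⁻¹ *ᵥ u)⁻¹ • vecMulVec (A⁻¹ *ᵥ u) (v ᵥ* A⁻¹) := by
  set c := (1 + v ⬝ᵥ A⁻¹ *ᵥ u)⁻¹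
  have hc : c * (1 + v ⬝ᵥ A⁻¹ *ᵥ u) = 1 := inv_mul_cancel₀ h
  have hA' : A * A⁻¹ = 1 := mul_nonsing_inv A ((isUnit_iff_isUnit_det A).mp hA)
  refine inv_eq_right_inv ?_
  rw [add_mul, mul_sub, mul_sub, hA', Matrix.mul_smul, Matrix.mul_smul, mul_vecMulVec,
    mulVec_mulVec, hA', one_mulVec, vecMulVec_mul_vecMulVec, vecMulVec_mul, vecMulVec_smul]
  linear_combination (norm := module) (-hc) • vecMulVec u (v ᵥ* A⁻¹)

theorem Matrix.inv_diagonal_of_ne_zero {K n : Type*} [Field K] [Fintype n] [DecidableEq n]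
    {d : n → K} (hd : ∀ k, d k ≠ 0) : (diagonal d)⁻¹ = diagonal d⁻¹ := by
  refine inv_eq_right_inv ?_
  rw [diagonal_mul_diagonal, ← diagonal_one]
  exact congrArg diagonal (funext fun k => mul_inv_cancel₀ (hd k))

theorem Matrix.inv_diagonal_add_smul_vecMulVec_self {K n : Type*} [Field K] [Fintype n]
    [DecidableEq n] {d : n → K} (hd : ∀ k, d k ≠ 0) (s : K) (b : n → K)
    (h : 1 + s * ∑ k, b k ^ 2 / d k ≠ 0) :
    (diagonal d + s • vecMulVec b b)⁻¹ =
      diagonal d⁻¹ - (s / (1 + s * ∑ k, b k ^ 2 / d k)) • vecMulVec (b / d) (b / d) := by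
  have hA : IsUnit (diagonal d) := isUnit_diagonal.mpr (Pi.isUnit_iff.mpr fun k => (hd k).isUnit)
  have hquad : b ⬝ᵥ (diagonal d)⁻¹ *ᵥ (s • b) = s * ∑ k, b k ^ 2 / d k := by
    simp only [inv_diagonal_of_ne_zero hd, mulVec_diagonal, dotProduct, Finset.mul_sum]
    refine Finset.sum_congr rfl fun k _ => ?_
    simp only [Pi.inv_apply, Pi.smul_apply, smul_eq_mul]
    ring
  rw [← smul_vecMulVec, inv_add_vecMulVec hA _ _ (hquad ▸ h), hquad, inv_diagonal_of_ne_zero hd]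
  congr 1
  ext i j
  simp only [smul_apply, vecMulVec_apply, mulVec_diagonal, vecMul_diagonal, Pi.smul_apply,
    Pi.inv_apply, Pi.div_apply, smul_eq_mul]
  ring

theorem Matrix.inv_diagonal_add_smul_vecMulVec_self_apply_neg {n : Type*} [Fintype n]
    [DecidableEq n] {d : n → ℝ} (hd : ∀ k, 0 < d k) {s : ℝ} (hs : 0 < s) {b : n → ℝ}
    {i j : n} (hij : i ≠ j) (hi : 0 < b i) (hj : 0 < b j) :
    (diagonal d + s • vecMulVec b b)⁻¹ i j < 0 := by
  have hsum : 0 ≤ ∑ k, b k ^ 2 / d k :=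
    Finset.sum_nonneg fun k _ => div_nonneg (sq_nonneg _) (hd k).le
  have hden : 0 < 1 + s * ∑ k, b k ^ 2 / d k := by positivity
  rw [inv_diagonal_add_smul_vecMulVec_self (fun k => (hd k).ne') s b hden.ne']
  simp only [sub_apply, diagonal_apply_ne _ hij, smul_apply, vecMulVec_apply, Pi.div_apply,
    smul_eq_mul, zero_sub, neg_neg_iff_pos]
  have := hd i; have := hd j
  positivity

theorem rank_one_inverse_offdiag_neg_general
    (p : ℕ) (Su : Matrix (Fin p) (Fin p) ℝ)
    (hdiag : ∀ k l : Fin p, k ≠ l → Su k l = 0)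
    (hpos : ∀ k : Fin p, 0 < Su k k)
    (b : Fin p → ℝ) (G : Finset (Fin p))
    (hbG : ∀ k ∈ G, 0 < b k)
    (σg : ℝ) (hσ : 0 < σg) :
    ∀ i ∈ G, ∀ j ∈ G, i ≠ j →
      (Su + σg ^ 2 • Matrix.vecMulVec b b)⁻¹ i j < 0 := by
  intro i hi j hj hij
  rw [← IsDiag.diagonal_diag hdiag]
  exact inv_diagonal_add_smul_vecMulVec_self_apply_neg hpos (by positivity) hij
    (hbG i hi) (hbG j hj)

/-- Under the rank-one local factor model with strictly positive loadings on the group `G`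
and a diagonal positive definite idiosyncratic covariance, all off-diagonal entries of
`(Su + σg² b bᵀ)⁻¹` restricted to indices in `G` are strictly negative. -/
theorem rank_one_inverse_offdiag_neg
    (p : ℕ) (Su : Matrix (Fin p) (Fin p) ℝ)
    (hdiag : ∀ k l : Fin p, k ≠ l → Su k l = 0)
    (hpos : ∀ k : Fin p, 0 < Su k k)
    (b : Fin p → ℝ) (G : Finset (Fin p))
    (hbG : ∀ k ∈ G, 0 < b k)
    (hb : ∀ k : Fin p, k ∉ G → b k = 0)
    (σg : ℝ) (hσ : 0 < σg) :
    ∀ i ∈ G, ∀ j ∈ G, i ≠ j →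
      (Su + σg ^ 2 • Matrix.vecMulVec b b)⁻¹ i j < 0 :=
  rank_one_inverse_offdiag_neg_general p Su hdiag hpos b G hbG σg hσ
end

section
/- Dual feasibility bound for the graphical lasso primal-dual witness: suppose Γ ∈ ℝ^{p²×p²}, S ⊆ {1,…,p}² with Γ_S invertible, the incoherence condition max_{e∈S^c} ‖Γ_{e,S} Γ_S^{-1}‖₁ ≤ 1 − α holds for some α ∈ (0,1], and vectors w, r ∈ ℝ^{p²} satisfy max(‖w‖_∞, ‖r‖_∞) ≤ (α ρ)/(2(4 − 2α)) for some ρ > 0. If z_{S^c} = ρ^{-1} Γ_{S^c,S} Γ_S^{-1}(w_S − r_S) − ρ^{-1}(w_{S^c} − r_{S^c}) + Γ_{S^c,S} Γ_S^{-1} z_S with ‖z_S‖_∞ ≤ 1, then ‖z_{S^c}‖_∞ ≤ (2−α)/ρ · (‖w‖_∞ + ‖r‖_∞) + (1 − α) < 1. -/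
open Finset Matrix

/-- Dual feasibility bound for the graphical lasso primal-dual witness: under the
incoherence condition and smallness of `w` and `r`, the constructed dual variable on `Sᶜ`
satisfies `‖z_{Sᶜ}‖_∞ ≤ (2−α)/ρ (‖w‖_∞ + ‖r‖_∞) + (1−α) < 1`. -/
theorem glasso_dual_feasibility
    (p : ℕ) (Γ : Matrix (Fin p × Fin p) (Fin p × Fin p) ℝ)
    (S : Finset (Fin p × Fin p))
    (ΓS : Matrix {x // x ∈ S} {x // x ∈ S} ℝ)
    (hΓS : ΓS = fun a b => Γ a.1 b.1)
    (hinv : IsUnit ΓS.det)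
    (α ρ : ℝ) (hα0 : 0 < α) (hα1 : α ≤ 1) (hρ : 0 < ρ)
    (hincoh : ∀ e ∉ S,
      ∑ b : {x // x ∈ S}, |∑ a : {x // x ∈ S}, Γ e a.1 * ΓS⁻¹ a b| ≤ 1 - α)
    (w r z : Fin p × Fin p → ℝ)
    (hw : ∀ x, |w x| ≤ α * ρ / (2 * (4 - 2 * α)))
    (hr : ∀ x, |r x| ≤ α * ρ / (2 * (4 - 2 * α)))
    (hzS : ∀ x ∈ S, |z x| ≤ 1)
    (hzSc : ∀ e ∉ S, z e =
      ρ⁻¹ * (∑ b : {x // x ∈ S},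
          (∑ a : {x // x ∈ S}, Γ e a.1 * ΓS⁻¹ a b) * (w b.1 - r b.1))
        - ρ⁻¹ * (w e - r e)
        + ∑ b : {x // x ∈ S},
            (∑ a : {x // x ∈ S}, Γ e a.1 * ΓS⁻¹ a b) * z b.1) :
    (∀ e ∉ S, |z e| ≤ (2 - α) / ρ * ((⨆ x, |w x|) + (⨆ x, |r x|)) + (1 - α)) ∧
      (2 - α) / ρ * ((⨆ x, |w x|) + (⨆ x, |r x|)) + (1 - α) < 1 := by
  set M := α * ρ / (2 * (4 - 2 * α)) with hM
  have h4 : 0 < 4 - 2 * α := by linarith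
  have hM0 : 0 < M := by
    apply div_pos (mul_pos hα0 hρ); positivity
  set W := ⨆ x, |w x| with hWdef
  set R := ⨆ x, |r x| with hRdef
  have hbddw : BddAbove (Set.range fun x => |w x|) := ⟨M, by rintro _ ⟨x, rfl⟩; exact hw x⟩
  have hbddr : BddAbove (Set.range fun x => |r x|) := ⟨M, by rintro _ ⟨x, rfl⟩; exact hr x⟩
  have hWM : W ≤ M := by
    rcases isEmpty_or_nonempty (Fin p × Fin p) with h | h
    · rw [hWdef, Real.iSup_of_isEmpty]; exact hM0.le
    · exact ciSup_le hw
  have hRM : R ≤ M := by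
    rcases isEmpty_or_nonempty (Fin p × Fin p) with h | h
    · rw [hRdef, Real.iSup_of_isEmpty]; exact hM0.le
    · exact ciSup_le hr
  constructor
  · intro e he
    have hne : Nonempty (Fin p × Fin p) := ⟨e⟩
    have hwW : ∀ x, |w x| ≤ W := fun x => le_ciSup hbddw x
    have hrR : ∀ x, |r x| ≤ R := fun x => le_ciSup hbddr x
    have hWR0 : 0 ≤ W + R := by
      have := (abs_nonneg (w e)).trans (hwW e)
      have := (abs_nonneg (r e)).trans (hrR e)
      linarith
    have hA := hincoh e he
    -- bound the first sum
    have h1 : |∑ b : {x // x ∈ S},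
        (∑ a : {x // x ∈ S}, Γ e a.1 * ΓS⁻¹ a b) * (w b.1 - r b.1)|
        ≤ (1 - α) * (W + R) := by
      calc |∑ b : {x // x ∈ S}, (∑ a : {x // x ∈ S}, Γ e a.1 * ΓS⁻¹ a b) * (w b.1 - r b.1)|
          ≤ ∑ b : {x // x ∈ S}, |(∑ a : {x // x ∈ S}, Γ e a.1 * ΓS⁻¹ a b) * (w b.1 - r b.1)| :=
            Finset.abs_sum_le_sum_abs _ _
        _ ≤ ∑ b : {x // x ∈ S}, |∑ a : {x // x ∈ S}, Γ e a.1 * ΓS⁻¹ a b| * (W + R) := by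
            apply Finset.sum_le_sum
            intro b _
            rw [abs_mul]
            apply mul_le_mul_of_nonneg_left _ (abs_nonneg _)
            calc |w b.1 - r b.1| ≤ |w b.1| + |r b.1| := abs_sub _ _
              _ ≤ W + R := add_le_add (hwW _) (hrR _)
        _ = (∑ b : {x // x ∈ S}, |∑ a : {x // x ∈ S}, Γ e a.1 * ΓS⁻¹ a b|) * (W + R) := by
            rw [Finset.sum_mul]
        _ ≤ (1 - α) * (W + R) := mul_le_mul_of_nonneg_right hA hWR0
    have h3 : |∑ b : {x // x ∈ S},
        (∑ a : {x // x ∈ S}, Γ e a.1 * ΓS⁻¹ a b) * z b.1| ≤ 1 - α := by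
      calc |∑ b : {x // x ∈ S}, (∑ a : {x // x ∈ S}, Γ e a.1 * ΓS⁻¹ a b) * z b.1|
          ≤ ∑ b : {x // x ∈ S}, |(∑ a : {x // x ∈ S}, Γ e a.1 * ΓS⁻¹ a b) * z b.1| :=
            Finset.abs_sum_le_sum_abs _ _
        _ ≤ ∑ b : {x // x ∈ S}, |∑ a : {x // x ∈ S}, Γ e a.1 * ΓS⁻¹ a b| := by
            apply Finset.sum_le_sum
            intro b _
            rw [abs_mul]
            exact mul_le_of_le_one_right (abs_nonneg _) (hzS b.1 b.2)
        _ ≤ 1 - α := hA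
    have h2 : |ρ⁻¹ * (w e - r e)| ≤ ρ⁻¹ * (W + R) := by
      rw [abs_mul, abs_of_pos (inv_pos.mpr hρ)]
      apply mul_le_mul_of_nonneg_left _ (inv_pos.mpr hρ).le
      calc |w e - r e| ≤ |w e| + |r e| := abs_sub _ _
        _ ≤ W + R := add_le_add (hwW _) (hrR _)
    rw [hzSc e he]
    have habs : ∀ a b c : ℝ, |a - b + c| ≤ |a| + |b| + |c| := by
      intro a b c
      calc |a - b + c| ≤ |a - b| + |c| := abs_add_le _ _
        _ ≤ |a| + |b| + |c| := by have := abs_sub a b; linarith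
    refine le_trans (habs _ _ _) ?_
    have h1' : |ρ⁻¹ * (∑ b : {x // x ∈ S},
        (∑ a : {x // x ∈ S}, Γ e a.1 * ΓS⁻¹ a b) * (w b.1 - r b.1))|
        ≤ ρ⁻¹ * ((1 - α) * (W + R)) := by
      rw [abs_mul, abs_of_pos (inv_pos.mpr hρ)]
      exact mul_le_mul_of_nonneg_left h1 (inv_pos.mpr hρ).le
    have hρ' : ρ⁻¹ * ((1 - α) * (W + R)) + ρ⁻¹ * (W + R) = (2 - α) / ρ * (W + R) := by
      field_simp; ring
    linarith
  · have key : (2 - α) / ρ * (W + R) ≤ α / 2 := by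
      have h2α : (0:ℝ) < 2 - α := by linarith
      have hc : (2 - α) / ρ * (2 * M) = α / 2 := by
        rw [hM]; field_simp; ring
      calc (2 - α) / ρ * (W + R) ≤ (2 - α) / ρ * (2 * M) := by
            apply mul_le_mul_of_nonneg_left (by linarith) (by positivity)
        _ = α / 2 := hc
    linarith
end
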